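/- arXiv:0904.0625 — 9 statements merged into one kernel-verified Lean document; each statement's English description precedes it below -/
import Mathlib

section
/- Equality case of the overlap bound: for α ∈ (0,1), the overlap satisfies U(α) = 1 if and only if p₀ = p₁ almost everywhere on Ω. -/
open MeasureTheory Real Set

/-!
The integrand `p₀ p₁ / (α p₀ + β p₁)` is the weighted harmonic mean of `p₀` and `p₁` (weights
`β` on `p₀`, `α` on `p₁`), and it falls short of the arithmetic mean `β p₀ + α p₁` by exactly
`α β (p₀ - p₁)² / (α p₀ + β p₁)`. On `Ω` the arithmetic mean integrates to `1`, so `U(α) = 1`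
says that a nonnegative integrable gap has integral zero, i.e. vanishes almost everywhere,
i.e. `p₀ = p₁` almost everywhere on `Ω`.
-/

/-- The overlap integral `U(α) = ∫_Ω p₀ p₁ / (α p₀ + (1-α) p₁)`. -/
noncomputable def overlap (Ω : Set ℝ) (p₀ p₁ : ℝ → ℝ) (α : ℝ) : ℝ :=
  ∫ w in Ω, p₀ w * p₁ w / (α * p₀ w + (1 - α) * p₁ w)

section WeightedMeans

theorem weighted_add_sub_mul_div_eq {K : Type*} [Field K] {a b α : K}
    (hd : α * a + (1 - α) * b ≠ 0) :
    (1 - α) * a + α * b - a * b / (α * a + (1 - α) * b) =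
      α * (1 - α) * (a - b) ^ 2 / (α * a + (1 - α) * b) := by
  field_simp
  ring

variable {a b α : ℝ}

theorem mul_div_weighted_add_le (hα₀ : 0 ≤ α) (hα₁ : α ≤ 1) (hd : 0 < α * a + (1 - α) * b) :
    a * b / (α * a + (1 - α) * b) ≤ (1 - α) * a + α * b := by
  have hβ : 0 ≤ 1 - α := sub_nonneg.2 hα₁
  have hgap := weighted_add_sub_mul_div_eq hd.ne'
  have : 0 ≤ α * (1 - α) * (a - b) ^ 2 / (α * a + (1 - α) * b) := by positivity
  linarith

theorem mul_div_weighted_add_eq_iff (hα : α ∈ Ioo (0 : ℝ) 1) (hd : 0 < α * a + (1 - α) * b) :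
    a * b / (α * a + (1 - α) * b) = (1 - α) * a + α * b ↔ a = b := by
  obtain ⟨hα₀, hα₁⟩ := hα
  have hβ : 1 - α ≠ 0 := (sub_pos.2 hα₁).ne'
  rw [eq_comm, ← sub_eq_zero, weighted_add_sub_mul_div_eq hd.ne']
  simp [hα₀.ne', hβ, hd.ne', sub_eq_zero]

end WeightedMeans

section Integrals

variable {X : Type*} [MeasurableSpace X] {μ : Measure X}

theorem setIntegral_pos_eq_integral {p : X → ℝ} (hp : 0 ≤ p) :
    ∫ x in {x | 0 < p x}, p x ∂μ = ∫ x, p x ∂μ :=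
  setIntegral_eq_integral_of_forall_compl_eq_zero fun x hx ↦ le_antisymm (not_lt.1 hx) (hp x)

theorem integral_mul_div_weighted_add_eq_iff {p₀ p₁ : X → ℝ} {α : ℝ} (hα : α ∈ Ioo (0 : ℝ) 1)
    (hi₀ : Integrable p₀ μ) (hi₁ : Integrable p₁ μ)
    (hpos₀ : ∀ᵐ x ∂μ, 0 < p₀ x) (hpos₁ : ∀ᵐ x ∂μ, 0 < p₁ x) :
    ∫ x, p₀ x * p₁ x / (α * p₀ x + (1 - α) * p₁ x) ∂μ = ∫ x, (1 - α) * p₀ x + α * p₁ x ∂μ ↔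
      ∀ᵐ x ∂μ, p₀ x = p₁ x := by
  obtain ⟨hα₀, hα₁⟩ := hα
  have hdenom : ∀ᵐ x ∂μ, 0 < α * p₀ x + (1 - α) * p₁ x := by
    filter_upwards [hpos₀, hpos₁] with x h₀ h₁
    have := sub_pos.2 hα₁
    positivity
  have hle : (fun x ↦ p₀ x * p₁ x / (α * p₀ x + (1 - α) * p₁ x)) ≤ᵐ[μ]
      fun x ↦ (1 - α) * p₀ x + α * p₁ x := by
    filter_upwards [hdenom] with x hx using mul_div_weighted_add_le hα₀.le hα₁.le hx
  have hA : Integrable (fun x ↦ (1 - α) * p₀ x + α * p₁ x) μ :=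
    (hi₀.const_mul _).add (hi₁.const_mul _)
  have hH : Integrable (fun x ↦ p₀ x * p₁ x / (α * p₀ x + (1 - α) * p₁ x)) μ := by
    have := hi₀.aemeasurable
    have := hi₁.aemeasurable
    refine hA.mono' (by fun_prop : AEMeasurable _ _).aestronglyMeasurable ?_
    filter_upwards [hpos₀, hpos₁, hdenom, hle] with x h₀ h₁ hx hxle
    rwa [norm_of_nonneg (by positivity)]
  rw [integral_eq_iff_of_ae_le hH hA hle]
  refine Filter.eventually_congr ?_
  filter_upwards [hdenom] with x hx using mul_div_weighted_add_eq_iff ⟨hα₀, hα₁⟩ hx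

end Integrals

theorem overlap_eq_one_iff_general
    (p₀ p₁ : ℝ → ℝ) (Ω : Set ℝ)
    (hpos0 : ∀ w, 0 ≤ p₀ w) (hpos1 : ∀ w, 0 ≤ p₁ w)
    (hnorm0 : ∫ w, p₀ w = 1) (hnorm1 : ∫ w, p₁ w = 1)
    (hΩ0 : Ω = {w | 0 < p₀ w}) (hΩ1 : Ω = {w | 0 < p₁ w})
    (α : ℝ) (hα : α ∈ Ioo (0:ℝ) 1) :
    overlap Ω p₀ p₁ α = 1 ↔ (∀ᵐ w ∂(volume.restrict Ω), p₀ w = p₁ w) := by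
  have hi₀ := integrable_of_integral_eq_one hnorm0
  have hi₁ := integrable_of_integral_eq_one hnorm1
  have hΩ : NullMeasurableSet Ω := by
    rw [hΩ0]; exact nullMeasurableSet_lt aemeasurable_const hi₀.aemeasurable
  have hsupp₀ : ∀ᵐ w ∂volume.restrict Ω, 0 < p₀ w := by
    filter_upwards [ae_restrict_mem₀ hΩ] with w hw
    rwa [hΩ0] at hw
  have hsupp₁ : ∀ᵐ w ∂volume.restrict Ω, 0 < p₁ w := by
    filter_upwards [ae_restrict_mem₀ hΩ] with w hw
    rwa [hΩ1] at hw
  have hmean : ∫ w in Ω, (1 - α) * p₀ w + α * p₁ w = 1 := by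
    rw [integral_add (hi₀.restrict.const_mul _) (hi₁.restrict.const_mul _), integral_const_mul,
      integral_const_mul, hΩ0, setIntegral_pos_eq_integral hpos0, ← hΩ0, hΩ1,
      setIntegral_pos_eq_integral hpos1, hnorm0, hnorm1]
    ring
  rw [overlap, ← integral_mul_div_weighted_add_eq_iff hα hi₀.restrict hi₁.restrict hsupp₀ hsupp₁,
    hmean]

/-- Equality case of the overlap bound: for `α ∈ (0,1)`, the overlap satisfies
`U(α) = 1` if and only if `p₀ = p₁` almost everywhere on `Ω`. -/
theorem overlap_eq_one_iff
    (p₀ p₁ : ℝ → ℝ) (Ω : Set ℝ)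
    (hm0 : Measurable p₀) (hm1 : Measurable p₁)
    (hpos0 : ∀ w, 0 ≤ p₀ w) (hpos1 : ∀ w, 0 ≤ p₁ w)
    (hnorm0 : ∫ w, p₀ w = 1) (hnorm1 : ∫ w, p₁ w = 1)
    (hΩ0 : Ω = {w | 0 < p₀ w}) (hΩ1 : Ω = {w | 0 < p₁ w})
    (α : ℝ) (hα : α ∈ Ioo (0:ℝ) 1) :
    overlap Ω p₀ p₁ α = 1 ↔ (∀ᵐ w ∂(volume.restrict Ω), p₀ w = p₁ w) :=
  overlap_eq_one_iff_general p₀ p₁ Ω hpos0 hpos1 hnorm0 hnorm1 hΩ0 hΩ1 α hα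
end

section
/- Variance identity for the overlap: for every α ∈ [0,1] with β = 1−α, assuming the integrals below are finite, U(α)(1 − U(α)) = α · Var₁( p₀/(α p₀ + β p₁) ) + β · Var₀( p₁/(α p₀ + β p₁) ), where Var_γ denotes the variance with respect to the density p_γ (γ = 0,1). -/
open MeasureTheory Real Set

/-- The mean `⟨g⟩_q = ∫_Ω g q` of `g` with respect to the density `q` on `Ω`. -/
noncomputable def wMean (Ω : Set ℝ) (q g : ℝ → ℝ) : ℝ :=
  ∫ w in Ω, g w * q w

/-- The variance `Var_q(g) = ⟨(g - ⟨g⟩_q)²⟩_q` of `g` with respect to the density `q`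
on `Ω`. -/
noncomputable def wVar (Ω : Set ℝ) (q g : ℝ → ℝ) : ℝ :=
  ∫ w in Ω, (g w - wMean Ω q g) ^ 2 * q w

/-- Expansion of the variance in terms of raw integrals. -/
lemma wVar_expand (Ω : Set ℝ) (q h : ℝ → ℝ)
    (h1 : IntegrableOn (fun w => h w ^ 2 * q w) Ω)
    (h2 : IntegrableOn (fun w => h w * q w) Ω)
    (h3 : IntegrableOn q Ω) :
    wVar Ω q h = (∫ w in Ω, h w ^ 2 * q w) - 2 * wMean Ω q h * wMean Ω q h
      + wMean Ω q h ^ 2 * ∫ w in Ω, q w := by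
  unfold wVar
  set m := wMean Ω q h with hm
  have hfe : (fun w => (h w - m) ^ 2 * q w)
      = fun w => (h w ^ 2 * q w - (2 * m) * (h w * q w)) + m ^ 2 * q w := by
    ext w; ring
  have hsub : IntegrableOn (fun w => h w ^ 2 * q w - 2 * m * (h w * q w)) Ω :=
    h1.sub (h2.const_mul (2 * m))
  rw [hfe, integral_add hsub (h3.const_mul (m ^ 2)),
    integral_sub h1 (h2.const_mul (2 * m)), integral_const_mul, integral_const_mul]
  have : (∫ w in Ω, h w * q w) = m := by rw [hm]; rfl
  rw [this]

/-- Variance identity for the overlap: for every `α ∈ [0,1]` with `β = 1 - α`,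
assuming the relevant integrals are finite,
`U(α)(1 - U(α)) = α·Var₁(p₀/(αp₀+βp₁)) + β·Var₀(p₁/(αp₀+βp₁))`. -/
theorem overlap_variance_identity
    (p₀ p₁ : ℝ → ℝ) (Ω : Set ℝ)
    (hm0 : Measurable p₀) (hm1 : Measurable p₁)
    (hpos0 : ∀ w, 0 ≤ p₀ w) (hpos1 : ∀ w, 0 ≤ p₁ w)
    (hnorm0 : ∫ w, p₀ w = 1) (hnorm1 : ∫ w, p₁ w = 1)
    (hΩ0 : Ω = {w | 0 < p₀ w}) (hΩ1 : Ω = {w | 0 < p₁ w})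
    (α : ℝ) (hα : α ∈ Icc (0:ℝ) 1)
    (hU : IntegrableOn (fun w => p₀ w * p₁ w / (α * p₀ w + (1 - α) * p₁ w)) Ω)
    (hsq0 : IntegrableOn
      (fun w => (p₁ w / (α * p₀ w + (1 - α) * p₁ w)) ^ 2 * p₀ w) Ω)
    (hsq1 : IntegrableOn
      (fun w => (p₀ w / (α * p₀ w + (1 - α) * p₁ w)) ^ 2 * p₁ w) Ω) :
    overlap Ω p₀ p₁ α * (1 - overlap Ω p₀ p₁ α)
      = α * wVar Ω p₁ (fun w => p₀ w / (α * p₀ w + (1 - α) * p₁ w))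
        + (1 - α) * wVar Ω p₀ (fun w => p₁ w / (α * p₀ w + (1 - α) * p₁ w)) := by
  obtain ⟨hα0, hα1⟩ := hα
  have hΩmeas : MeasurableSet Ω := by
    rw [hΩ0]; exact measurableSet_lt measurable_const hm0
  -- positivity of the denominator on Ω
  have hDpos : ∀ w ∈ Ω, 0 < α * p₀ w + (1 - α) * p₁ w := by
    intro w hw
    have h0 : 0 < p₀ w := by rw [hΩ0] at hw; exact hw
    have h1 : 0 < p₁ w := by rw [hΩ1] at hw; exact hw
    rcases eq_or_lt_of_le hα0 with h | h
    · rw [← h]; simpa using h1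
    · exact add_pos_of_pos_of_nonneg (mul_pos h h0)
        (mul_nonneg (by linarith) h1.le)
  -- global integrability of the densities
  have hint0 : Integrable p₀ := by
    by_contra h; rw [integral_undef h] at hnorm0; norm_num at hnorm0
  have hint1 : Integrable p₁ := by
    by_contra h; rw [integral_undef h] at hnorm1; norm_num at hnorm1
  -- the densities integrate to 1 on Ω
  have hzero : ∀ (p : ℝ → ℝ), (∀ w, 0 ≤ p w) → Integrable p → (∫ w, p w = 1) →
      Ω = {w | 0 < p w} → ∫ w in Ω, p w = 1 := by
    intro p hp hip hn hΩ
    have hcompl : ∫ w in Ωᶜ, p w = 0 := by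
      apply setIntegral_eq_zero_of_forall_eq_zero
      intro w hw
      rw [hΩ] at hw
      have : ¬ 0 < p w := hw
      linarith [hp w, not_lt.mp this]
    have := integral_add_compl hΩmeas hip
    rw [hcompl, add_zero] at this
    rw [this, hn]
  have hone0 : ∫ w in Ω, p₀ w = 1 := hzero p₀ hpos0 hint0 hnorm0 hΩ0
  have hone1 : ∫ w in Ω, p₁ w = 1 := hzero p₁ hpos1 hint1 hnorm1 hΩ1
  set U := overlap Ω p₀ p₁ α with hUdef
  -- the means both equal U
  have hmean1 : wMean Ω p₁ (fun w => p₀ w / (α * p₀ w + (1 - α) * p₁ w)) = U := by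
    rw [hUdef]; unfold wMean overlap
    congr 1; ext w; ring
  have hmean0 : wMean Ω p₀ (fun w => p₁ w / (α * p₀ w + (1 - α) * p₁ w)) = U := by
    rw [hUdef]; unfold wMean overlap
    congr 1; ext w; ring
  -- integrability of the first-moment integrands
  have hUint1 : IntegrableOn
      (fun w => (p₀ w / (α * p₀ w + (1 - α) * p₁ w)) * p₁ w) Ω := by
    have : (fun w => (p₀ w / (α * p₀ w + (1 - α) * p₁ w)) * p₁ w)
        = fun w => p₀ w * p₁ w / (α * p₀ w + (1 - α) * p₁ w) := by ext w; ring
    rw [this]; exact hU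
  have hUint0 : IntegrableOn
      (fun w => (p₁ w / (α * p₀ w + (1 - α) * p₁ w)) * p₀ w) Ω := by
    have : (fun w => (p₁ w / (α * p₀ w + (1 - α) * p₁ w)) * p₀ w)
        = fun w => p₀ w * p₁ w / (α * p₀ w + (1 - α) * p₁ w) := by ext w; ring
    rw [this]; exact hU
  -- variance expansions
  have hv1 := wVar_expand Ω p₁ (fun w => p₀ w / (α * p₀ w + (1 - α) * p₁ w))
    hsq1 hUint1 (hint1.integrableOn)
  have hv0 := wVar_expand Ω p₀ (fun w => p₁ w / (α * p₀ w + (1 - α) * p₁ w))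
    hsq0 hUint0 (hint0.integrableOn)
  rw [hmean1, hone1] at hv1
  rw [hmean0, hone0] at hv0
  -- the key second-moment combination
  have hS : α * (∫ w in Ω, (p₀ w / (α * p₀ w + (1 - α) * p₁ w)) ^ 2 * p₁ w)
      + (1 - α) * (∫ w in Ω, (p₁ w / (α * p₀ w + (1 - α) * p₁ w)) ^ 2 * p₀ w)
      = U := by
    rw [← integral_const_mul, ← integral_const_mul,
      ← integral_add (hsq1.const_mul α) (hsq0.const_mul (1-α))]
    rw [hUdef]; unfold overlap
    apply setIntegral_congr_fun hΩmeas
    intro w hw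
    have hD := hDpos w hw
    have hDne : α * p₀ w + (1 - α) * p₁ w ≠ 0 := ne_of_gt hD
    field_simp
  rw [hv1, hv0]
  nlinarith [hS]
end

section
/- First derivative of the overlap: for α ∈ (0,1), assuming the integral below is finite, the function α ↦ U(α) is differentiable at α with derivative U′(α) = ∫_Ω p₀(w)p₁(w)(p₁(w) − p₀(w))/(α p₀(w) + β p₁(w))² dw, where β = 1−α. -/
open MeasureTheory Real Set

/-!
Differentiate under the integral sign. For `x` in the neighbourhood `(α/2, (1+α)/2)` of `α` the
mixture `x p₀ + (1-x) p₁` is at least half of `α p₀ + (1-α) p₁`, so the pointwise derivatives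
`p₀ p₁ (p₁ - p₀) / (x p₀ + (1-x) p₁)²` are dominated by four times the integrable one at `α`.
Points where the mixture vanishes are those where `p₀ = p₁ = 0`, and there the integrand is
identically `0`.
-/

open Filter Topology

theorem hasDerivAt_div_mix (c a b : ℝ) {x : ℝ} (hx : x * a + (1 - x) * b ≠ 0) :
    HasDerivAt (fun y => c / (y * a + (1 - y) * b))
      (c * (b - a) / (x * a + (1 - x) * b) ^ 2) x := by
  have hmix : HasDerivAt (fun y => y * a + (1 - y) * b) (a - b) x :=
    (((hasDerivAt_id x).mul_const a).add
      (((hasDerivAt_const x (1 : ℝ)).sub (hasDerivAt_id x)).mul_const b)).congr_deriv (by ring)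
  exact ((hasDerivAt_const x c).div hmix hx).congr_deriv (by ring)

theorem mix_pos {a b x : ℝ} (ha : 0 ≤ a) (hb : 0 ≤ b) (hab : 0 < a + b) (hx : x ∈ Ioo 0 1) :
    0 < x * a + (1 - x) * b := by
  obtain ⟨hx0, hx1⟩ := hx
  rcases ha.eq_or_lt with rfl | ha
  · have : 0 < 1 - x := by linarith
    simp only [mul_zero, zero_add] at hab ⊢
    positivity
  · have : 0 ≤ 1 - x := by linarith
    positivity

theorem hasDerivAt_mul_div_mix {a b x : ℝ} (ha : 0 ≤ a) (hb : 0 ≤ b) (hx : x ∈ Ioo 0 1) :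
    HasDerivAt (fun y => a * b / (y * a + (1 - y) * b))
      (a * b * (b - a) / (x * a + (1 - x) * b) ^ 2) x := by
  rcases (add_nonneg ha hb).eq_or_lt with hab | hab
  · obtain ⟨rfl, rfl⟩ : a = 0 ∧ b = 0 := ⟨by linarith, by linarith⟩
    simpa using hasDerivAt_const x (0 : ℝ)
  · exact hasDerivAt_div_mix _ a b (mix_pos ha hb hab hx).ne'

theorem half_mix_le_mix {a b α x : ℝ} (ha : 0 ≤ a) (hb : 0 ≤ b)
    (hx₀ : α / 2 ≤ x) (hx₁ : (1 - α) / 2 ≤ 1 - x) :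
    (α * a + (1 - α) * b) / 2 ≤ x * a + (1 - x) * b := by
  nlinarith

theorem abs_mul_div_mix_sq_le {a b α x : ℝ} (ha : 0 ≤ a) (hb : 0 ≤ b) (hα : α ∈ Ioo 0 1)
    (hx₀ : α / 2 ≤ x) (hx₁ : (1 - α) / 2 ≤ 1 - x) :
    |a * b * (b - a) / (x * a + (1 - x) * b) ^ 2|
      ≤ 4 * |a * b * (b - a) / (α * a + (1 - α) * b) ^ 2| := by
  rcases (add_nonneg ha hb).eq_or_lt with hab | hab
  · obtain ⟨rfl, rfl⟩ : a = 0 ∧ b = 0 := ⟨by linarith, by linarith⟩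
    simp
  have hpos := mix_pos ha hb hab hα
  have hle := half_mix_le_mix ha hb hx₀ hx₁
  calc |a * b * (b - a) / (x * a + (1 - x) * b) ^ 2|
      = |a * b * (b - a)| / (x * a + (1 - x) * b) ^ 2 := by rw [abs_div, abs_sq]
    _ ≤ |a * b * (b - a)| / ((α * a + (1 - α) * b) / 2) ^ 2 := by
        gcongr
    _ = 4 * |a * b * (b - a) / (α * a + (1 - α) * b) ^ 2| := by
        rw [abs_div, abs_sq, div_pow, div_div_eq_mul_div]
        ring

theorem hasDerivAt_integral_mul_div_mix {X : Type*} [MeasurableSpace X] {μ : Measure X}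
    {p q : X → ℝ} (hp : ∀ w, 0 ≤ p w) (hq : ∀ w, 0 ≤ q w) {α : ℝ} (hα : α ∈ Ioo 0 1)
    (hmeas : ∀ᶠ x in 𝓝 α,
      AEStronglyMeasurable (fun w => p w * q w / (x * p w + (1 - x) * q w)) μ)
    (hint : Integrable (fun w => p w * q w / (α * p w + (1 - α) * q w)) μ)
    (hint' : Integrable
      (fun w => p w * q w * (q w - p w) / (α * p w + (1 - α) * q w) ^ 2) μ) :
    HasDerivAt (fun x => ∫ w, p w * q w / (x * p w + (1 - x) * q w) ∂μ)
      (∫ w, p w * q w * (q w - p w) / (α * p w + (1 - α) * q w) ^ 2 ∂μ) α := by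
  obtain ⟨hα₀, hα₁⟩ := hα
  have hnhds : Ioo (α / 2) ((1 + α) / 2) ∈ 𝓝 α := Ioo_mem_nhds (by linarith) (by linarith)
  refine (hasDerivAt_integral_of_dominated_loc_of_deriv_le
    (F' := fun x w => p w * q w * (q w - p w) / (x * p w + (1 - x) * q w) ^ 2) hnhds hmeas hint
    hint'.aestronglyMeasurable ?_ (hint'.norm.const_mul 4) ?_).2
  · refine ae_of_all _ fun w x ⟨hx₀, hx₁⟩ => ?_
    exact abs_mul_div_mix_sq_le (hp w) (hq w) ⟨hα₀, hα₁⟩ hx₀.le (by linarith)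
  · refine ae_of_all _ fun w x ⟨hx₀, hx₁⟩ => ?_
    exact hasDerivAt_mul_div_mix (hp w) (hq w) ⟨by linarith, by linarith⟩

theorem overlap_hasDerivAt_general
    (p₀ p₁ : ℝ → ℝ) (Ω : Set ℝ)
    (hpos0 : ∀ w, 0 ≤ p₀ w) (hpos1 : ∀ w, 0 ≤ p₁ w)
    (α : ℝ) (hα : α ∈ Ioo (0:ℝ) 1)
    (hUint : ∀ a ∈ Icc (0:ℝ) 1,
      IntegrableOn (fun w => p₀ w * p₁ w / (a * p₀ w + (1 - a) * p₁ w)) Ω)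
    (hDint : IntegrableOn
      (fun w => p₀ w * p₁ w * (p₁ w - p₀ w) / (α * p₀ w + (1 - α) * p₁ w) ^ 2) Ω) :
    HasDerivAt (overlap Ω p₀ p₁)
      (∫ w in Ω, p₀ w * p₁ w * (p₁ w - p₀ w) / (α * p₀ w + (1 - α) * p₁ w) ^ 2)
      α :=
  hasDerivAt_integral_mul_div_mix hpos0 hpos1 hα
    (eventually_of_mem (Icc_mem_nhds hα.1 hα.2) fun a ha => (hUint a ha).aestronglyMeasurable)
    (hUint α (Ioo_subset_Icc_self hα)) hDint

/-- First derivative of the overlap: for `α ∈ (0,1)`, assuming the relevant integrals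
are finite, `α ↦ U(α)` is differentiable at `α` with derivative
`U'(α) = ∫_Ω p₀ p₁ (p₁ - p₀) / (α p₀ + (1-α) p₁)² dw`. -/
theorem overlap_hasDerivAt
    (p₀ p₁ : ℝ → ℝ) (Ω : Set ℝ)
    (hm0 : Measurable p₀) (hm1 : Measurable p₁)
    (hpos0 : ∀ w, 0 ≤ p₀ w) (hpos1 : ∀ w, 0 ≤ p₁ w)
    (hnorm0 : ∫ w, p₀ w = 1) (hnorm1 : ∫ w, p₁ w = 1)
    (hΩ0 : Ω = {w | 0 < p₀ w}) (hΩ1 : Ω = {w | 0 < p₁ w})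
    (α : ℝ) (hα : α ∈ Ioo (0:ℝ) 1)
    (hUint : ∀ a ∈ Icc (0:ℝ) 1,
      IntegrableOn (fun w => p₀ w * p₁ w / (a * p₀ w + (1 - a) * p₁ w)) Ω)
    (hDint : IntegrableOn
      (fun w => p₀ w * p₁ w * (p₁ w - p₀ w) / (α * p₀ w + (1 - α) * p₁ w) ^ 2) Ω) :
    HasDerivAt (overlap Ω p₀ p₁)
      (∫ w in Ω, p₀ w * p₁ w * (p₁ w - p₀ w) / (α * p₀ w + (1 - α) * p₁ w) ^ 2)
      α :=
  overlap_hasDerivAt_general p₀ p₁ Ω hpos0 hpos1 α hα hUint hDint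
end

section
/- Super-logarithmic convexity inequality for the overlap: for α ∈ (0,1), with β = 1−α and p = α p₀ + β p₁, the second-order integral expression for U satisfies U″(α)·U(α) − 2·U′(α)² = 2 Var_α((p₁ − p₀)/p) · U(α)² ≥ 0, where Var_α denotes the variance with respect to the bridging density p_α = (1/U(α)) · p₀ p₁/p; in particular U(α)·U″(α) ≥ 2·U′(α)². -/
open MeasureTheory Real Set

/-- Super-logarithmic convexity inequality for the overlap: for `α ∈ (0,1)`, with
`β = 1 - α` and `p = α p₀ + β p₁`,
`U''(α)·U(α) - 2·U'(α)² = 2 Var_α((p₁ - p₀)/p) · U(α)² ≥ 0`, where `Var_α` is the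
variance with respect to the bridging density `p_α = (1/U(α)) p₀ p₁ / p`; in
particular `U(α)·U''(α) ≥ 2·U'(α)²`. -/
theorem overlap_superlog_convexity
    (p₀ p₁ : ℝ → ℝ) (Ω : Set ℝ)
    (hm0 : Measurable p₀) (hm1 : Measurable p₁)
    (hpos0 : ∀ w, 0 ≤ p₀ w) (hpos1 : ∀ w, 0 ≤ p₁ w)
    (hnorm0 : ∫ w, p₀ w = 1) (hnorm1 : ∫ w, p₁ w = 1)
    (hΩ0 : Ω = {w | 0 < p₀ w}) (hΩ1 : Ω = {w | 0 < p₁ w})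
    (α : ℝ) (hα : α ∈ Ioo (0:ℝ) 1)
    (U U' U'' : ℝ)
    (hU : U = ∫ w in Ω, p₀ w * p₁ w / (α * p₀ w + (1 - α) * p₁ w))
    (hU' : U' = ∫ w in Ω,
      p₀ w * p₁ w * (p₁ w - p₀ w) / (α * p₀ w + (1 - α) * p₁ w) ^ 2)
    (hU'' : U'' = 2 * ∫ w in Ω,
      p₀ w * p₁ w * (p₁ w - p₀ w) ^ 2 / (α * p₀ w + (1 - α) * p₁ w) ^ 3)
    (hUpos : 0 < U)
    (hUint : IntegrableOn (fun w => p₀ w * p₁ w / (α * p₀ w + (1 - α) * p₁ w)) Ω)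
    (hU'int : IntegrableOn
      (fun w => p₀ w * p₁ w * (p₁ w - p₀ w) / (α * p₀ w + (1 - α) * p₁ w) ^ 2) Ω)
    (hU''int : IntegrableOn
      (fun w => p₀ w * p₁ w * (p₁ w - p₀ w) ^ 2 / (α * p₀ w + (1 - α) * p₁ w) ^ 3) Ω) :
    U'' * U - 2 * U' ^ 2
      = 2 * wVar Ω
          (fun w => p₀ w * p₁ w / ((α * p₀ w + (1 - α) * p₁ w) * U))
          (fun w => (p₁ w - p₀ w) / (α * p₀ w + (1 - α) * p₁ w)) * U ^ 2 ∧
    2 * U' ^ 2 ≤ U * U'' := by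
  obtain ⟨hα0, hα1⟩ := hα
  have hβ : 0 < 1 - α := by linarith
  have hΩm : MeasurableSet Ω := hΩ0 ▸ measurableSet_lt measurable_const hm0
  set P : ℝ → ℝ := fun w => α * p₀ w + (1 - α) * p₁ w with hP
  have hPpos : ∀ w ∈ Ω, 0 < P w := fun w hw => by
    have h0 : 0 < p₀ w := by rw [hΩ0] at hw; exact hw
    have h1 : 0 < p₁ w := by rw [hΩ1] at hw; exact hw
    positivity
  set q : ℝ → ℝ := fun w => p₀ w * p₁ w / (P w * U) with hq
  set g : ℝ → ℝ := fun w => (p₁ w - p₀ w) / P w with hg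
  have hUne : U ≠ 0 := ne_of_gt hUpos
  -- pointwise identities on Ω
  have e0 : EqOn (fun w => p₀ w * p₁ w / P w * U⁻¹) q Ω := fun w hw => by
    have := (hPpos w hw).ne'
    simp only [q]; field_simp
  have e1 : EqOn (fun w => p₀ w * p₁ w * (p₁ w - p₀ w) / P w ^ 2 * U⁻¹)
      (fun w => g w * q w) Ω := fun w hw => by
    have := (hPpos w hw).ne'
    simp only [q, g]; field_simp
  have e2 : EqOn (fun w => p₀ w * p₁ w * (p₁ w - p₀ w) ^ 2 / P w ^ 3 * U⁻¹)
      (fun w => g w ^ 2 * q w) Ω := fun w hw => by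
    have := (hPpos w hw).ne'
    simp only [q, g]; field_simp
  -- integrals
  have I0 : ∫ w in Ω, q w = 1 := by
    rw [← setIntegral_congr_fun hΩm e0, integral_mul_const, ← hU]
    field_simp
  have I1 : ∫ w in Ω, g w * q w = U' * U⁻¹ := by
    rw [← setIntegral_congr_fun hΩm e1, integral_mul_const, ← hU']
  have I2 : ∫ w in Ω, g w ^ 2 * q w = (U'' / 2) * U⁻¹ := by
    rw [← setIntegral_congr_fun hΩm e2, integral_mul_const]
    congr 1
    rw [hU'']; ring
  -- integrability
  have j0 : IntegrableOn q Ω := IntegrableOn.congr_fun (hUint.mul_const U⁻¹) e0 hΩm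
  have j1 : IntegrableOn (fun w => g w * q w) Ω :=
    IntegrableOn.congr_fun (hU'int.mul_const U⁻¹) e1 hΩm
  have j2 : IntegrableOn (fun w => g w ^ 2 * q w) Ω :=
    IntegrableOn.congr_fun (hU''int.mul_const U⁻¹) e2 hΩm
  have hmean : wMean Ω q g = U' * U⁻¹ := I1
  have hvar : wVar Ω q g = (U'' / 2) * U⁻¹ - (U' * U⁻¹) ^ 2 := by
    have expand : ∀ w, (g w - wMean Ω q g) ^ 2 * q w
        = g w ^ 2 * q w - (2 * wMean Ω q g) * (g w * q w)
          + (wMean Ω q g) ^ 2 * q w := fun w => by ring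
    unfold wVar
    simp only [expand]
    have jA : Integrable
        (fun w => g w ^ 2 * q w - (2 * wMean Ω q g) * (g w * q w))
        (volume.restrict Ω) := j2.sub (j1.const_mul _)
    have jB : Integrable (fun w => (wMean Ω q g) ^ 2 * q w)
        (volume.restrict Ω) := j0.const_mul _
    have jC : Integrable (fun w => (2 * wMean Ω q g) * (g w * q w))
        (volume.restrict Ω) := j1.const_mul _
    rw [integral_add jA jB, integral_sub j2 jC, integral_const_mul, integral_const_mul,
      I0, I1, I2, hmean]
    ring
  have hvarnn : 0 ≤ wVar Ω q g := by
    unfold wVar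
    apply setIntegral_nonneg hΩm
    intro w hw
    have h0 : 0 ≤ p₀ w := hpos0 w
    have h1 : 0 ≤ p₁ w := hpos1 w
    have hP' : 0 < P w := hPpos w hw
    have : 0 ≤ q w := by positivity
    positivity
  have key : U'' * U - 2 * U' ^ 2 = 2 * wVar Ω q g * U ^ 2 := by
    rw [hvar]; field_simp
  refine ⟨key, ?_⟩
  nlinarith [key, hvarnn, sq_nonneg U]
end

section
/- Expressions for the relative fluctuations in terms of the overlap and its derivative: for α ∈ (0,1) with β = 1−α and p = α p₀ + β p₁, assuming the integrals are finite, Var₁(p₀/p) = U(α) − β U′(α) − U(α)² and Var₀(p₁/p) = U(α) + α U′(α) − U(α)², where U′(α) = ∫_Ω p₀ p₁(p₁ − p₀)/p² dw. -/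
open MeasureTheory Real Set

lemma var_expand (Ω : Set ℝ) (q g : ℝ → ℝ)
    (hq : IntegrableOn q Ω) (hone : ∫ w in Ω, q w = 1)
    (hgq : IntegrableOn (fun w => g w * q w) Ω)
    (hg2q : IntegrableOn (fun w => g w ^ 2 * q w) Ω) :
    wVar Ω q g = (∫ w in Ω, g w ^ 2 * q w) - (wMean Ω q g) ^ 2 := by
  set m := wMean Ω q g with hm
  have hexp : ∀ w, (g w - m) ^ 2 * q w
      = g w ^ 2 * q w - (2 * m) * (g w * q w) + m ^ 2 * q w := by
    intro w; ring
  rw [wVar, ← hm]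
  simp_rw [hexp]
  rw [integral_add (by exact (hg2q.sub (hgq.const_mul _))) (hq.const_mul _),
    integral_sub hg2q (hgq.const_mul _), integral_const_mul, integral_const_mul,
    hone]
  have : ∫ w in Ω, g w * q w = m := rfl
  rw [this]; ring

/-- Expressions for the relative fluctuations in terms of the overlap and its
derivative: for `α ∈ (0,1)` with `β = 1 - α` and `p = α p₀ + β p₁`,
`Var₁(p₀/p) = U(α) - β U'(α) - U(α)²` and `Var₀(p₁/p) = U(α) + α U'(α) - U(α)²`,
where `U'(α) = ∫_Ω p₀ p₁ (p₁ - p₀)/p² dw`. -/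
theorem relative_fluctuations_formulas
    (p₀ p₁ : ℝ → ℝ) (Ω : Set ℝ)
    (hm0 : Measurable p₀) (hm1 : Measurable p₁)
    (hpos0 : ∀ w, 0 ≤ p₀ w) (hpos1 : ∀ w, 0 ≤ p₁ w)
    (hnorm0 : ∫ w, p₀ w = 1) (hnorm1 : ∫ w, p₁ w = 1)
    (hΩ0 : Ω = {w | 0 < p₀ w}) (hΩ1 : Ω = {w | 0 < p₁ w})
    (α : ℝ) (hα : α ∈ Ioo (0:ℝ) 1)
    (U U' : ℝ)
    (hU : U = ∫ w in Ω, p₀ w * p₁ w / (α * p₀ w + (1 - α) * p₁ w))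
    (hU' : U' = ∫ w in Ω,
      p₀ w * p₁ w * (p₁ w - p₀ w) / (α * p₀ w + (1 - α) * p₁ w) ^ 2)
    (hUint : IntegrableOn (fun w => p₀ w * p₁ w / (α * p₀ w + (1 - α) * p₁ w)) Ω)
    (hU'int : IntegrableOn
      (fun w => p₀ w * p₁ w * (p₁ w - p₀ w) / (α * p₀ w + (1 - α) * p₁ w) ^ 2) Ω)
    (hsq1 : IntegrableOn
      (fun w => (p₀ w / (α * p₀ w + (1 - α) * p₁ w)) ^ 2 * p₁ w) Ω)
    (hsq0 : IntegrableOn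
      (fun w => (p₁ w / (α * p₀ w + (1 - α) * p₁ w)) ^ 2 * p₀ w) Ω) :
    wVar Ω p₁ (fun w => p₀ w / (α * p₀ w + (1 - α) * p₁ w))
      = U - (1 - α) * U' - U ^ 2 ∧
    wVar Ω p₀ (fun w => p₁ w / (α * p₀ w + (1 - α) * p₁ w))
      = U + α * U' - U ^ 2 := by
  obtain ⟨hα0, hα1⟩ := hα
  have hmeasΩ : MeasurableSet Ω := by
    rw [hΩ0]; exact measurableSet_lt measurable_const hm0
  -- global integrability of the densities
  have hint0 : Integrable p₀ := by
    by_contra h; rw [integral_undef h] at hnorm0; norm_num at hnorm0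
  have hint1 : Integrable p₁ := by
    by_contra h; rw [integral_undef h] at hnorm1; norm_num at hnorm1
  -- restricted integrals of densities equal 1
  have hone0 : ∫ w in Ω, p₀ w = 1 := by
    rw [setIntegral_eq_integral_of_forall_compl_eq_zero, hnorm0]
    intro w hw
    rw [hΩ0] at hw
    exact le_antisymm (not_lt.mp hw) (hpos0 w)
  have hone1 : ∫ w in Ω, p₁ w = 1 := by
    rw [setIntegral_eq_integral_of_forall_compl_eq_zero, hnorm1]
    intro w hw
    rw [hΩ1] at hw
    exact le_antisymm (not_lt.mp hw) (hpos1 w)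
  -- positivity of the mixture on Ω
  have hppos : ∀ w ∈ Ω, 0 < α * p₀ w + (1 - α) * p₁ w := by
    intro w hw
    have h0 : 0 < p₀ w := by rw [hΩ0] at hw; exact hw
    have h1 : 0 < p₁ w := by rw [hΩ1] at hw; exact hw
    have : 0 < 1 - α := by linarith
    positivity
  -- means
  have hmean1 : wMean Ω p₁ (fun w => p₀ w / (α * p₀ w + (1 - α) * p₁ w)) = U := by
    rw [wMean, hU]
    congr 1; funext w; rw [div_mul_eq_mul_div]
  have hmean0 : wMean Ω p₀ (fun w => p₁ w / (α * p₀ w + (1 - α) * p₁ w)) = U := by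
    rw [wMean, hU]
    congr 1; funext w; rw [div_mul_eq_mul_div, mul_comm (p₁ w)]
  -- first part integrability of g * q
  have hgq1 : IntegrableOn
      (fun w => (p₀ w / (α * p₀ w + (1 - α) * p₁ w)) * p₁ w) Ω := by
    have : (fun w => (p₀ w / (α * p₀ w + (1 - α) * p₁ w)) * p₁ w)
        = fun w => p₀ w * p₁ w / (α * p₀ w + (1 - α) * p₁ w) := by
      funext w; rw [div_mul_eq_mul_div]
    rw [this]; exact hUint
  have hgq0 : IntegrableOn
      (fun w => (p₁ w / (α * p₀ w + (1 - α) * p₁ w)) * p₀ w) Ω := by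
    have : (fun w => (p₁ w / (α * p₀ w + (1 - α) * p₁ w)) * p₀ w)
        = fun w => p₀ w * p₁ w / (α * p₀ w + (1 - α) * p₁ w) := by
      funext w; rw [div_mul_eq_mul_div, mul_comm (p₁ w)]
    rw [this]; exact hUint
  -- second moments
  have hsm1 : (∫ w in Ω, (p₀ w / (α * p₀ w + (1 - α) * p₁ w)) ^ 2 * p₁ w)
      = U - (1 - α) * U' := by
    rw [hU, hU', ← integral_const_mul,
      ← integral_sub hUint (hU'int.const_mul _)]
    apply setIntegral_congr_fun hmeasΩ
    intro w hw
    have hp := hppos w hw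
    have hp' : α * p₀ w + (1 - α) * p₁ w ≠ 0 := ne_of_gt hp
    field_simp
    ring
  have hsm0 : (∫ w in Ω, (p₁ w / (α * p₀ w + (1 - α) * p₁ w)) ^ 2 * p₀ w)
      = U + α * U' := by
    rw [hU, hU', ← integral_const_mul,
      ← integral_add hUint (hU'int.const_mul _)]
    apply setIntegral_congr_fun hmeasΩ
    intro w hw
    have hp := hppos w hw
    have hp' : α * p₀ w + (1 - α) * p₁ w ≠ 0 := ne_of_gt hp
    field_simp
    ring
  constructor
  · rw [var_expand Ω p₁ _ hint1.integrableOn hone1 hgq1 hsq1, hsm1, hmean1]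
  · rw [var_expand Ω p₀ _ hint0.integrableOn hone0 hgq0 hsq0, hsm0, hmean0]
end

section
/- Decomposition of the rescaled asymptotic mean square error: for α ∈ (0,1) with β = 1−α and p = α p₀ + β p₁, assuming U(α) ∈ (0,1] and the variances are finite, M(α) := (1/(αβ))(1/U(α) − 1) = Var₀(p₁/p)/(α U(α)²) + Var₁(p₀/p)/(β U(α)²). -/
open MeasureTheory Real Set

/-!
Write `r₀ = p₁/p` and `r₁ = p₀/p`. Both have mean `U` (under `p₀` and `p₁` respectively), so
`Var₀ r₀ = A - U²` and `Var₁ r₁ = B - U²` with `A = ⟨r₀²⟩₀`, `B = ⟨r₁²⟩₁`. Pointwise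
`β r₀² p₀ + α r₁² p₁ = p₀ p₁ (α p₀ + β p₁)/p² = p₀ p₁/p`, hence `β A + α B = U`, and the claimed
decomposition is then an identity of rational functions in `α`, `U`, `A`, `B`.
-/

theorem wVar_eq_integral_sq_sub_wMean_sq {Ω : Set ℝ} {q g : ℝ → ℝ}
    (hq : ∫ w in Ω, q w = 1) (hg : IntegrableOn (fun w => g w * q w) Ω)
    (hg2 : IntegrableOn (fun w => g w ^ 2 * q w) Ω) :
    wVar Ω q g = (∫ w in Ω, g w ^ 2 * q w) - wMean Ω q g ^ 2 := by
  set m := wMean Ω q g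
  have hmean : ∫ w in Ω, g w * q w = m := rfl
  have hqi : IntegrableOn q Ω := integrable_of_integral_eq_one hq
  have expand : ∀ w, (g w - m) ^ 2 * q w
      = (g w ^ 2 * q w - 2 * m * (g w * q w)) + m ^ 2 * q w := fun w => by ring
  have hdiff : IntegrableOn (fun w => g w ^ 2 * q w - 2 * m * (g w * q w)) Ω :=
    hg2.sub (hg.const_mul _)
  rw [wVar, funext expand, integral_add hdiff (hqi.const_mul _),
    integral_sub hg2 (hg.const_mul _), integral_const_mul, integral_const_mul, hmean, hq]
  ring

-- No positivity is needed: where the mixture vanishes both sides are the junk value `x / 0 = 0`.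
theorem mixture_ratio_sq_identity (α a b : ℝ) :
    (1 - α) * ((b / (α * a + (1 - α) * b)) ^ 2 * a)
        + α * ((a / (α * a + (1 - α) * b)) ^ 2 * b)
      = a * b / (α * a + (1 - α) * b) := by
  rcases eq_or_ne (α * a + (1 - α) * b) 0 with h | h
  · simp [h]
  · field_simp
    ring

theorem setIntegral_pos_eq_integral_of_nonneg {X : Type*} [MeasurableSpace X] {μ : Measure X}
    {p : X → ℝ} (hpos : ∀ x, 0 ≤ p x) : ∫ x in {x | 0 < p x}, p x ∂μ = ∫ x, p x ∂μ :=
  setIntegral_eq_integral_of_forall_compl_eq_zero fun x hx => le_antisymm (not_lt.mp hx) (hpos x)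

theorem mse_eq_of_second_moments {α U A B : ℝ} (hα : α ≠ 0) (hβ : 1 - α ≠ 0) (hU : U ≠ 0)
    (h : (1 - α) * A + α * B = U) :
    1 / (α * (1 - α)) * (1 / U - 1)
      = (A - U ^ 2) / (α * U ^ 2) + (B - U ^ 2) / ((1 - α) * U ^ 2) := by
  field_simp
  linear_combination -h

theorem mse_decomposition_general
    (p₀ p₁ : ℝ → ℝ) (Ω : Set ℝ)
    (hpos0 : ∀ w, 0 ≤ p₀ w) (hpos1 : ∀ w, 0 ≤ p₁ w)
    (hnorm0 : ∫ w, p₀ w = 1) (hnorm1 : ∫ w, p₁ w = 1)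
    (hΩ0 : Ω = {w | 0 < p₀ w}) (hΩ1 : Ω = {w | 0 < p₁ w})
    (α : ℝ) (hα : α ∈ Ioo (0:ℝ) 1)
    (U : ℝ)
    (hU : U = ∫ w in Ω, p₀ w * p₁ w / (α * p₀ w + (1 - α) * p₁ w))
    (hUpos : 0 < U)
    (hUint : IntegrableOn (fun w => p₀ w * p₁ w / (α * p₀ w + (1 - α) * p₁ w)) Ω)
    (hsq0 : IntegrableOn
      (fun w => (p₁ w / (α * p₀ w + (1 - α) * p₁ w)) ^ 2 * p₀ w) Ω)
    (hsq1 : IntegrableOn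
      (fun w => (p₀ w / (α * p₀ w + (1 - α) * p₁ w)) ^ 2 * p₁ w) Ω) :
    (1 / (α * (1 - α))) * (1 / U - 1)
      = wVar Ω p₀ (fun w => p₁ w / (α * p₀ w + (1 - α) * p₁ w)) / (α * U ^ 2)
        + wVar Ω p₁ (fun w => p₀ w / (α * p₀ w + (1 - α) * p₁ w))
          / ((1 - α) * U ^ 2) := by
  have hP0 : ∫ w in Ω, p₀ w = 1 := by rw [hΩ0, setIntegral_pos_eq_integral_of_nonneg hpos0, hnorm0]
  have hP1 : ∫ w in Ω, p₁ w = 1 := by rw [hΩ1, setIntegral_pos_eq_integral_of_nonneg hpos1, hnorm1]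
  set p : ℝ → ℝ := fun w => α * p₀ w + (1 - α) * p₁ w
  have hr₀ : (fun w => p₁ w / p w * p₀ w) = fun w => p₀ w * p₁ w / p w := by ext; ring
  have hr₁ : (fun w => p₀ w / p w * p₁ w) = fun w => p₀ w * p₁ w / p w := by ext; ring
  have hmean0 : wMean Ω p₀ (fun w => p₁ w / p w) = U := by rw [wMean, hr₀, hU]
  have hmean1 : wMean Ω p₁ (fun w => p₀ w / p w) = U := by rw [wMean, hr₁, hU]
  have hsecond : (1 - α) * (∫ w in Ω, (p₁ w / p w) ^ 2 * p₀ w)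
      + α * (∫ w in Ω, (p₀ w / p w) ^ 2 * p₁ w) = U := by
    rw [← integral_const_mul, ← integral_const_mul,
      ← integral_add (hsq0.const_mul _) (hsq1.const_mul _), hU]
    exact integral_congr_ae (.of_forall fun w => mixture_ratio_sq_identity α (p₀ w) (p₁ w))
  rw [wVar_eq_integral_sq_sub_wMean_sq hP0 (hr₀ ▸ hUint) hsq0,
    wVar_eq_integral_sq_sub_wMean_sq hP1 (hr₁ ▸ hUint) hsq1, hmean0, hmean1]
  exact mse_eq_of_second_moments hα.1.ne' (sub_pos.mpr hα.2).ne' hUpos.ne' hsecond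

/-- Decomposition of the rescaled asymptotic mean square error: for `α ∈ (0,1)` with
`β = 1 - α` and `p = α p₀ + β p₁`, assuming `U(α) ∈ (0,1]` and the variances are
finite, `M(α) = (1/(αβ))(1/U(α) - 1) = Var₀(p₁/p)/(α U(α)²) + Var₁(p₀/p)/(β U(α)²)`. -/
theorem mse_decomposition
    (p₀ p₁ : ℝ → ℝ) (Ω : Set ℝ)
    (hm0 : Measurable p₀) (hm1 : Measurable p₁)
    (hpos0 : ∀ w, 0 ≤ p₀ w) (hpos1 : ∀ w, 0 ≤ p₁ w)
    (hnorm0 : ∫ w, p₀ w = 1) (hnorm1 : ∫ w, p₁ w = 1)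
    (hΩ0 : Ω = {w | 0 < p₀ w}) (hΩ1 : Ω = {w | 0 < p₁ w})
    (α : ℝ) (hα : α ∈ Ioo (0:ℝ) 1)
    (U : ℝ)
    (hU : U = ∫ w in Ω, p₀ w * p₁ w / (α * p₀ w + (1 - α) * p₁ w))
    (hUpos : 0 < U) (hUle : U ≤ 1)
    (hUint : IntegrableOn (fun w => p₀ w * p₁ w / (α * p₀ w + (1 - α) * p₁ w)) Ω)
    (hsq0 : IntegrableOn
      (fun w => (p₁ w / (α * p₀ w + (1 - α) * p₁ w)) ^ 2 * p₀ w) Ω)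
    (hsq1 : IntegrableOn
      (fun w => (p₀ w / (α * p₀ w + (1 - α) * p₁ w)) ^ 2 * p₁ w) Ω) :
    (1 / (α * (1 - α))) * (1 / U - 1)
      = wVar Ω p₀ (fun w => p₁ w / (α * p₀ w + (1 - α) * p₁ w)) / (α * U ^ 2)
        + wVar Ω p₁ (fun w => p₀ w / (α * p₀ w + (1 - α) * p₁ w))
          / ((1 - α) * U ^ 2) :=
  mse_decomposition_general p₀ p₁ Ω hpos0 hpos1 hnorm0 hnorm1 hΩ0 hΩ1 α hα U hU hUpos hUint hsq0
    hsq1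
end

section
/- Lemma (positive semidefiniteness of Γ_α): for every α ∈ [0,1] with β = 1−α and every measurable function f : ℝ → ℝ whose variances under p₀, p₁, and the bridging density p_α are finite, Γ_α(f) := β Var₀(f) + α Var₁(f) − U(α) Var_α(f) ≥ 0. -/
open MeasureTheory Real Set

/-!
Write `β = 1 - α` and `Q = p₀ p₁ / (α p₀ + β p₁)`, so that `U Var_α f = ∫ (f - m)² Q` with
`m = ⟨f⟩_α`. As `m` is the `Q`-weighted mean of `f`, `∫ (f - m)² Q ≤ ∫ (f - c)² Q` for every
constant `c`; take `c = β m₀ + α m₁`. Then `f - c = β (f - m₀) + α (f - m₁)` pointwise, and the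
weighted Cauchy–Schwarz inequality `Q (β u + α v)² ≤ β p₀ u² + α p₁ v²` bounds `∫ (f - c)² Q`
by `β Var₀ f + α Var₁ f`.
-/

noncomputable def bridgeWeight {X : Type*} (α : ℝ) (p₀ p₁ : X → ℝ) (x : X) : ℝ :=
  p₀ x * p₁ x / (α * p₀ x + (1 - α) * p₁ x)

lemma integral_sub_sq_mul {X : Type*} [MeasurableSpace X] {μ : Measure X} {f q : X → ℝ}
    {m : ℝ} (c : ℝ) (hq : Integrable q μ) (hfq : Integrable (fun x => f x * q x) μ)
    (hm : ∫ x, f x * q x ∂μ = m * ∫ x, q x ∂μ)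
    (hvar : Integrable (fun x => (f x - m) ^ 2 * q x) μ) :
    ∫ x, (f x - c) ^ 2 * q x ∂μ
      = ∫ x, (f x - m) ^ 2 * q x ∂μ + (m - c) ^ 2 * ∫ x, q x ∂μ := by
  have hcentred : Integrable (fun x => 2 * (m - c) * (f x * q x - m * q x)) μ :=
    (hfq.sub (hq.const_mul m)).const_mul _
  have hsum : Integrable (fun x => (f x - m) ^ 2 * q x + 2 * (m - c) * (f x * q x - m * q x)) μ :=
    hvar.add hcentred
  calc ∫ x, (f x - c) ^ 2 * q x ∂μ
      = ∫ x, (f x - m) ^ 2 * q x + 2 * (m - c) * (f x * q x - m * q x) + (m - c) ^ 2 * q x ∂μ := by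
        congr 1 with x; ring
    _ = ∫ x, (f x - m) ^ 2 * q x ∂μ + (m - c) ^ 2 * ∫ x, q x ∂μ := by
        rw [integral_add hsum (hq.const_mul _), integral_add hvar hcentred, integral_const_mul,
          integral_const_mul, integral_sub hfq (hq.const_mul m), integral_const_mul, hm]
        ring

lemma Integrable.mul_of_mul_div_const {X : Type*} [MeasurableSpace X] {μ : Measure X}
    {g q : X → ℝ} {U : ℝ} (hU : U ≠ 0) (h : Integrable (fun x => g x * (q x / U)) μ) :
    Integrable (fun x => g x * q x) μ := by
  convert h.const_mul U using 2 with x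
  field_simp

section Bridge

variable {X : Type*} {α : ℝ} {p₀ p₁ : X → ℝ}

lemma bridgeWeight_nonneg (hα : α ∈ Icc (0 : ℝ) 1) {x : X} (h₀ : 0 ≤ p₀ x) (h₁ : 0 ≤ p₁ x) :
    0 ≤ bridgeWeight α p₀ p₁ x :=
  div_nonneg (mul_nonneg h₀ h₁)
    (add_nonneg (mul_nonneg hα.1 h₀) (mul_nonneg (sub_nonneg.2 hα.2) h₁))

lemma sq_sub_mul_bridgeWeight_le (hα : α ∈ Icc (0 : ℝ) 1) {x : X} (h₀ : 0 ≤ p₀ x)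
    (h₁ : 0 ≤ p₁ x) (z a b : ℝ) :
    (z - ((1 - α) * a + α * b)) ^ 2 * bridgeWeight α p₀ p₁ x
      ≤ (1 - α) * ((z - a) ^ 2 * p₀ x) + α * ((z - b) ^ 2 * p₁ x) := by
  obtain ⟨hα₀, hα₁⟩ := hα
  have hβ : 0 ≤ 1 - α := sub_nonneg.2 hα₁
  have hrhs : 0 ≤ (1 - α) * ((z - a) ^ 2 * p₀ x) + α * ((z - b) ^ 2 * p₁ x) := by positivity
  rw [bridgeWeight]
  rcases (add_nonneg (mul_nonneg hα₀ h₀) (mul_nonneg hβ h₁)).eq_or_lt with hp | hp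
  · rwa [← hp, div_zero, mul_zero]
  rw [mul_div_assoc', div_le_iff₀ hp]
  have hdefect : ((1 - α) * ((z - a) ^ 2 * p₀ x) + α * ((z - b) ^ 2 * p₁ x))
        * (α * p₀ x + (1 - α) * p₁ x) - (z - ((1 - α) * a + α * b)) ^ 2 * (p₀ x * p₁ x)
      = α * (1 - α) * (p₀ x * (z - a) - p₁ x * (z - b)) ^ 2 := by
    ring
  linarith [mul_nonneg (mul_nonneg hα₀ hβ) (sq_nonneg (p₀ x * (z - a) - p₁ x * (z - b)))]

lemma integral_sq_sub_mul_bridgeWeight_le [MeasurableSpace X] {μ : Measure X} {f : X → ℝ}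
    {m : ℝ} (a b : ℝ) (hα : α ∈ Icc (0 : ℝ) 1) (h₀ : ∀ x, 0 ≤ p₀ x) (h₁ : ∀ x, 0 ≤ p₁ x)
    (hQ : Integrable (bridgeWeight α p₀ p₁) μ)
    (hfQ : Integrable (fun x => f x * bridgeWeight α p₀ p₁ x) μ)
    (hm : ∫ x, f x * bridgeWeight α p₀ p₁ x ∂μ = m * ∫ x, bridgeWeight α p₀ p₁ x ∂μ)
    (hvar : Integrable (fun x => (f x - m) ^ 2 * bridgeWeight α p₀ p₁ x) μ)
    (ha : Integrable (fun x => (f x - a) ^ 2 * p₀ x) μ)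
    (hb : Integrable (fun x => (f x - b) ^ 2 * p₁ x) μ) :
    ∫ x, (f x - m) ^ 2 * bridgeWeight α p₀ p₁ x ∂μ
      ≤ (1 - α) * ∫ x, (f x - a) ^ 2 * p₀ x ∂μ + α * ∫ x, (f x - b) ^ 2 * p₁ x ∂μ := by
  set c := (1 - α) * a + α * b
  have hQ_nonneg (x : X) : 0 ≤ bridgeWeight α p₀ p₁ x := bridgeWeight_nonneg hα (h₀ x) (h₁ x)
  calc ∫ x, (f x - m) ^ 2 * bridgeWeight α p₀ p₁ x ∂μ
      ≤ ∫ x, (f x - c) ^ 2 * bridgeWeight α p₀ p₁ x ∂μ := by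
        rw [integral_sub_sq_mul c hQ hfQ hm hvar]
        exact le_add_of_nonneg_right (mul_nonneg (sq_nonneg _) (integral_nonneg hQ_nonneg))
    _ ≤ ∫ x, (1 - α) * ((f x - a) ^ 2 * p₀ x) + α * ((f x - b) ^ 2 * p₁ x) ∂μ :=
        integral_mono_of_nonneg (ae_of_all _ fun x => mul_nonneg (sq_nonneg _) (hQ_nonneg x))
          ((ha.const_mul _).add (hb.const_mul _))
          (ae_of_all _ fun x => sq_sub_mul_bridgeWeight_le hα (h₀ x) (h₁ x) _ _ _)
    _ = (1 - α) * ∫ x, (f x - a) ^ 2 * p₀ x ∂μ + α * ∫ x, (f x - b) ^ 2 * p₁ x ∂μ := by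
        rw [integral_add (ha.const_mul _) (hb.const_mul _), integral_const_mul,
          integral_const_mul]

end Bridge

lemma mul_wMean_div_const {U : ℝ} (hU : U ≠ 0) (Ω : Set ℝ) (q f : ℝ → ℝ) :
    U * wMean Ω (fun w => q w / U) f = ∫ w in Ω, f w * q w := by
  rw [wMean, ← integral_const_mul]
  congr 1 with w
  field_simp

lemma mul_wVar_div_const {U : ℝ} (hU : U ≠ 0) (Ω : Set ℝ) (q f : ℝ → ℝ) :
    U * wVar Ω (fun w => q w / U) f
      = ∫ w in Ω, (f w - wMean Ω (fun w => q w / U) f) ^ 2 * q w := by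
  rw [wVar, ← integral_const_mul]
  congr 1 with w
  field_simp

theorem Gamma_nonneg_general
    (p₀ p₁ : ℝ → ℝ) (Ω : Set ℝ)
    (hpos0 : ∀ w, 0 ≤ p₀ w) (hpos1 : ∀ w, 0 ≤ p₁ w)
    (α : ℝ) (hα : α ∈ Icc (0:ℝ) 1)
    (U : ℝ)
    (hU : U = ∫ w in Ω, p₀ w * p₁ w / (α * p₀ w + (1 - α) * p₁ w))
    (hUpos : 0 < U)
    (hUint : IntegrableOn (fun w => p₀ w * p₁ w / (α * p₀ w + (1 - α) * p₁ w)) Ω)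
    (f : ℝ → ℝ)
    (hfα : IntegrableOn (fun w =>
      f w * (p₀ w * p₁ w / ((α * p₀ w + (1 - α) * p₁ w) * U))) Ω)
    (hv0 : IntegrableOn (fun w => (f w - wMean Ω p₀ f) ^ 2 * p₀ w) Ω)
    (hv1 : IntegrableOn (fun w => (f w - wMean Ω p₁ f) ^ 2 * p₁ w) Ω)
    (hvα : IntegrableOn (fun w =>
      (f w - wMean Ω (fun v => p₀ v * p₁ v / ((α * p₀ v + (1 - α) * p₁ v) * U)) f) ^ 2
        * (p₀ w * p₁ w / ((α * p₀ w + (1 - α) * p₁ w) * U))) Ω) :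
    0 ≤ (1 - α) * wVar Ω p₀ f + α * wVar Ω p₁ f
        - U * wVar Ω (fun w => p₀ w * p₁ w / ((α * p₀ w + (1 - α) * p₁ w) * U)) f := by
  simp only [← div_div] at hfα hvα ⊢
  have hUQ : ∫ w in Ω, bridgeWeight α p₀ p₁ w = U := hU.symm
  have hmean : ∫ w in Ω, f w * bridgeWeight α p₀ p₁ w
      = wMean Ω (fun w => bridgeWeight α p₀ p₁ w / U) f * ∫ w in Ω, bridgeWeight α p₀ p₁ w := by
    rw [hUQ, ← mul_wMean_div_const hUpos.ne', mul_comm]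
  rw [sub_nonneg]
  calc U * wVar Ω (fun w => bridgeWeight α p₀ p₁ w / U) f
      = ∫ w in Ω, (f w - wMean Ω (fun w => bridgeWeight α p₀ p₁ w / U) f) ^ 2
          * bridgeWeight α p₀ p₁ w :=
        mul_wVar_div_const hUpos.ne' _ _ _
    _ ≤ (1 - α) * wVar Ω p₀ f + α * wVar Ω p₁ f :=
        integral_sq_sub_mul_bridgeWeight_le _ _ hα hpos0 hpos1 hUint
          (Integrable.mul_of_mul_div_const hUpos.ne' hfα) hmean
          (Integrable.mul_of_mul_div_const hUpos.ne' hvα) hv0 hv1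

/-- Lemma (positive semidefiniteness of `Γ_α`): for every `α ∈ [0,1]` with
`β = 1 - α` and every measurable `f : ℝ → ℝ` whose variances under `p₀`, `p₁`, and
the bridging density `p_α = (1/U(α)) p₀ p₁ / (α p₀ + β p₁)` are finite,
`Γ_α(f) = β Var₀(f) + α Var₁(f) - U(α) Var_α(f) ≥ 0`. -/
theorem Gamma_nonneg
    (p₀ p₁ : ℝ → ℝ) (Ω : Set ℝ)
    (hm0 : Measurable p₀) (hm1 : Measurable p₁)
    (hpos0 : ∀ w, 0 ≤ p₀ w) (hpos1 : ∀ w, 0 ≤ p₁ w)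
    (hnorm0 : ∫ w, p₀ w = 1) (hnorm1 : ∫ w, p₁ w = 1)
    (hΩ0 : Ω = {w | 0 < p₀ w}) (hΩ1 : Ω = {w | 0 < p₁ w})
    (α : ℝ) (hα : α ∈ Icc (0:ℝ) 1)
    (U : ℝ)
    (hU : U = ∫ w in Ω, p₀ w * p₁ w / (α * p₀ w + (1 - α) * p₁ w))
    (hUpos : 0 < U)
    (hUint : IntegrableOn (fun w => p₀ w * p₁ w / (α * p₀ w + (1 - α) * p₁ w)) Ω)
    (f : ℝ → ℝ) (hf : Measurable f)
    (hf0 : IntegrableOn (fun w => f w * p₀ w) Ω)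
    (hf1 : IntegrableOn (fun w => f w * p₁ w) Ω)
    (hfα : IntegrableOn (fun w =>
      f w * (p₀ w * p₁ w / ((α * p₀ w + (1 - α) * p₁ w) * U))) Ω)
    (hv0 : IntegrableOn (fun w => (f w - wMean Ω p₀ f) ^ 2 * p₀ w) Ω)
    (hv1 : IntegrableOn (fun w => (f w - wMean Ω p₁ f) ^ 2 * p₁ w) Ω)
    (hvα : IntegrableOn (fun w =>
      (f w - wMean Ω (fun v => p₀ v * p₁ v / ((α * p₀ v + (1 - α) * p₁ v) * U)) f) ^ 2
        * (p₀ w * p₁ w / ((α * p₀ w + (1 - α) * p₁ w) * U))) Ω) :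
    0 ≤ (1 - α) * wVar Ω p₀ f + α * wVar Ω p₁ f
        - U * wVar Ω (fun w => p₀ w * p₁ w / ((α * p₀ w + (1 - α) * p₁ w) * U)) f :=
  Gamma_nonneg_general p₀ p₁ Ω hpos0 hpos1 α hα U hU hUpos hUint f hfα hv0 hv1 hvα
end

section
/- Boundary limits of the mean square error: if the fluctuation theorem p₀(w) = e^{w−Δf} p₁(w) holds on Ω and the variances Var₀(e^{−(w−Δf)}) and Var₁(e^{w−Δf}) are finite, then M(α) = (1/(α(1−α)))(1/U(α) − 1) satisfies lim_{α→1⁻} M(α) = Var₀(e^{−(w−Δf)}) and lim_{α→0⁺} M(α) = Var₁(e^{w−Δf}); i.e., the asymptotic mean square error of the two-sided estimator converges to that of the one-sided forward and reverse estimators, respectively. -/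
/-!
Put `s w = exp (-(w - Δf))`, so that the fluctuation theorem reads `p₁ = s p₀` on `Ω`, and
`U(α) = ∫ s p₀ / (α + (1 - α) s)`. Because `∫ p₀ = ∫ s p₀ = 1`, the pointwise identity
`p₀ - s p₀ / D - α (p₀ - s p₀) = α (1 - α) (s - 1)² p₀ / D` with `D = α + (1 - α) s` gives
`1 - U(α) = α (1 - α) V(α)`, where `V(α) = ∫ (s - 1)² p₀ / D`; hence `M = V / U`.
Since `D` is a convex combination of `1` and `s`, `1 / D ≤ 1 + 1 / s`, so by dominated
convergence `U` and `V` are continuous on `[0, 1]`. At the endpoints `U(0) = U(1) = 1`,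
`V(1) = ∫ (s - 1)² p₀ = Var₀(s)` and `V(0) = ∫ (s - 1)² p₀ / s = Var₁(1 / s)`.
-/

open MeasureTheory Real Set Filter

/-- The rescaled asymptotic mean square error `M(α) = (1/(α(1-α)))(1/U(α) - 1)`. -/
noncomputable def mseM (Ω : Set ℝ) (p₀ p₁ : ℝ → ℝ) (α : ℝ) : ℝ :=
  (1 / (α * (1 - α))) * (1 / overlap Ω p₀ p₁ α - 1)

open Topology

lemma mix_pos_s18 {α s : ℝ} (hα : α ∈ Icc (0 : ℝ) 1) (hs : 0 < s) : 0 < α + (1 - α) * s := by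
  rcases hα with ⟨h0, h1⟩
  rcases h0.eq_or_lt with rfl | h0
  · simpa using hs
  · nlinarith

lemma inv_mix_le {α s : ℝ} (hα : α ∈ Icc (0 : ℝ) 1) (hs : 0 < s) :
    (α + (1 - α) * s)⁻¹ ≤ 1 + s⁻¹ := by
  have hD := mix_pos_s18 hα hs
  obtain ⟨h0, h1⟩ := hα
  rcases le_total 1 s with h | h
  · have : 1 ≤ α + (1 - α) * s := by nlinarith
    linarith [inv_le_one_of_one_le₀ this, inv_pos.2 hs]
  · have : s ≤ α + (1 - α) * s := by nlinarith
    linarith [inv_anti₀ hs this]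

lemma norm_div_mix_le {a α s : ℝ} (hα : α ∈ Icc (0 : ℝ) 1) (hs : 0 < s) :
    ‖a / (α + (1 - α) * s)‖ ≤ ‖a‖ + ‖a / s‖ := by
  have h := mul_le_mul_of_nonneg_left (inv_mix_le hα hs) (norm_nonneg a)
  simpa [div_eq_mul_inv, abs_of_pos hs, abs_of_pos (mix_pos_s18 hα hs), mul_add] using h

noncomputable def mixIntegral {X : Type*} [MeasurableSpace X] (μ : Measure X) (s g : X → ℝ)
    (α : ℝ) : ℝ :=
  ∫ x, g x / (α + (1 - α) * s x) ∂μ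

noncomputable def mixMse {X : Type*} [MeasurableSpace X] (μ : Measure X) (s p : X → ℝ)
    (α : ℝ) : ℝ :=
  1 / (α * (1 - α)) * (1 / mixIntegral μ s (fun x => s x * p x) α - 1)

section MixIntegral

variable {X : Type*} [MeasurableSpace X] {μ : Measure X} {s g p : X → ℝ}

@[simp]
lemma mixIntegral_zero : mixIntegral μ s g 0 = ∫ x, g x / s x ∂μ := by
  simp [mixIntegral]

@[simp]
lemma mixIntegral_one : mixIntegral μ s g 1 = ∫ x, g x ∂μ := by
  simp [mixIntegral]

lemma aestronglyMeasurable_div_mix (hsm : Measurable s) (hg : AEStronglyMeasurable g μ)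
    (α : ℝ) : AEStronglyMeasurable (fun x => g x / (α + (1 - α) * s x)) μ :=
  hg.mul (measurable_const.add (measurable_const.mul hsm)).inv.aestronglyMeasurable

lemma integrable_div_mix {α : ℝ} (hα : α ∈ Icc (0 : ℝ) 1) (hs : ∀ x, 0 < s x)
    (hsm : Measurable s) (hg : Integrable g μ) (hgs : Integrable (fun x => g x / s x) μ) :
    Integrable (fun x => g x / (α + (1 - α) * s x)) μ :=
  (hg.norm.add hgs.norm).mono' (aestronglyMeasurable_div_mix hsm hg.1 α)
    (.of_forall fun x => norm_div_mix_le hα (hs x))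

lemma continuousOn_mixIntegral (hs : ∀ x, 0 < s x) (hsm : Measurable s) (hg : Integrable g μ)
    (hgs : Integrable (fun x => g x / s x) μ) : ContinuousOn (mixIntegral μ s g) (Icc 0 1) := by
  refine continuousOn_of_dominated (fun α _ => aestronglyMeasurable_div_mix hsm hg.1 α)
    (fun α hα => .of_forall fun x => norm_div_mix_le hα (hs x)) (hg.norm.add hgs.norm)
    (.of_forall fun x => ?_)
  exact continuousOn_const.div (by fun_prop) fun α hα => (mix_pos_s18 hα (hs x)).ne'

lemma one_sub_mixIntegral {α : ℝ} (hα : α ∈ Icc (0 : ℝ) 1) (hs : ∀ x, 0 < s x)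
    (hsm : Measurable s) (hp : Integrable p μ) (hsp : Integrable (fun x => s x * p x) μ)
    (hp_one : ∫ x, p x ∂μ = 1) (hsp_one : ∫ x, s x * p x ∂μ = 1)
    (hG : Integrable (fun x => (s x - 1) ^ 2 * p x) μ)
    (hGs : Integrable (fun x => (s x - 1) ^ 2 * p x / s x) μ) :
    1 - mixIntegral μ s (fun x => s x * p x) α
      = α * (1 - α) * mixIntegral μ s (fun x => (s x - 1) ^ 2 * p x) α := by
  have hspD : Integrable (fun x => s x * p x / (α + (1 - α) * s x)) μ :=
    integrable_div_mix hα hs hsm hsp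
      (hp.congr (.of_forall fun x => (mul_div_cancel_left₀ (p x) (hs x).ne').symm))
  have hGD := integrable_div_mix hα hs hsm hG hGs
  have hpointwise : ∀ x, p x - s x * p x / (α + (1 - α) * s x) - α * (p x - s x * p x)
      = α * (1 - α) * ((s x - 1) ^ 2 * p x / (α + (1 - α) * s x)) := by
    intro x
    have hinv := mul_inv_cancel₀ (mix_pos_s18 hα (hs x)).ne'
    simp only [div_eq_mul_inv]
    -- `p (1 - α (1 - s)) D = s p + α (1 - α) (s - 1)² p` for `D = α + (1 - α) s`
    linear_combination (-(p x * (1 - α * (1 - s x)))) * hinv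
  calc 1 - mixIntegral μ s (fun x => s x * p x) α
      = (∫ x, p x ∂μ) - mixIntegral μ s (fun x => s x * p x) α
          - α * ((∫ x, p x ∂μ) - ∫ x, s x * p x ∂μ) := by rw [hp_one, hsp_one]; ring
    _ = ∫ x, (p x - s x * p x / (α + (1 - α) * s x) - α * (p x - s x * p x)) ∂μ := by
      rw [integral_sub, integral_sub hp hspD, integral_const_mul, integral_sub hp hsp, mixIntegral]
      · exact hp.sub hspD
      · exact (hp.sub hsp).const_mul α
    _ = α * (1 - α) * mixIntegral μ s (fun x => (s x - 1) ^ 2 * p x) α := by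
      simp only [hpointwise, integral_const_mul, mixIntegral]

lemma tendsto_mixMse_nhdsWithin {a : ℝ} (ha : a ∈ Icc (0 : ℝ) 1) (hs : ∀ x, 0 < s x)
    (hsm : Measurable s) (hp : Integrable p μ) (hsp : Integrable (fun x => s x * p x) μ)
    (hp_one : ∫ x, p x ∂μ = 1) (hsp_one : ∫ x, s x * p x ∂μ = 1)
    (hG : Integrable (fun x => (s x - 1) ^ 2 * p x) μ)
    (hGs : Integrable (fun x => (s x - 1) ^ 2 * p x / s x) μ)
    (hUa : mixIntegral μ s (fun x => s x * p x) a ≠ 0) :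
    Tendsto (mixMse μ s p) (𝓝[Ioo 0 1] a)
      (𝓝 (mixIntegral μ s (fun x => (s x - 1) ^ 2 * p x) a
        / mixIntegral μ s (fun x => s x * p x) a)) := by
  have hsp_div : Integrable (fun x => s x * p x / s x) μ :=
    hp.congr (.of_forall fun x => (mul_div_cancel_left₀ (p x) (hs x).ne').symm)
  have hU := ((continuousOn_mixIntegral hs hsm hsp hsp_div).continuousWithinAt ha).mono
    Ioo_subset_Icc_self
  have hV := ((continuousOn_mixIntegral hs hsm hG hGs).continuousWithinAt ha).mono
    Ioo_subset_Icc_self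
  refine (hV.tendsto.div hU.tendsto hUa).congr' ?_
  filter_upwards [self_mem_nhdsWithin, hU.tendsto.eventually_ne hUa] with α hα hUα
  unfold mixMse
  have hα₀ : α ≠ 0 := hα.1.ne'
  have hα₁ : 1 - α ≠ 0 := sub_ne_zero.2 hα.2.ne'
  have key := one_sub_mixIntegral (Ioo_subset_Icc_self hα) hs hsm hp hsp hp_one hsp_one hG hGs
  rw [Pi.div_apply, div_sub_one hUα, key]
  field_simp

lemma tendsto_mixMse_boundary (hs : ∀ x, 0 < s x)
    (hsm : Measurable s) (hp : Integrable p μ) (hsp : Integrable (fun x => s x * p x) μ)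
    (hp_one : ∫ x, p x ∂μ = 1) (hsp_one : ∫ x, s x * p x ∂μ = 1)
    (hG : Integrable (fun x => (s x - 1) ^ 2 * p x) μ)
    (hGs : Integrable (fun x => (s x - 1) ^ 2 * p x / s x) μ) :
    Tendsto (mixMse μ s p) (𝓝[Ioo 0 1] 1) (𝓝 (∫ x, (s x - 1) ^ 2 * p x ∂μ)) ∧
      Tendsto (mixMse μ s p) (𝓝[Ioo 0 1] 0) (𝓝 (∫ x, (s x - 1) ^ 2 * p x / s x ∂μ)) := by
  have hcancel : ∀ x, s x * p x / s x = p x := fun x => mul_div_cancel_left₀ (p x) (hs x).ne'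
  constructor
  · simpa [hsp_one] using tendsto_mixMse_nhdsWithin (right_mem_Icc.2 zero_le_one) hs hsm hp hsp
      hp_one hsp_one hG hGs (by simp [hsp_one])
  · simpa [hcancel, hp_one] using tendsto_mixMse_nhdsWithin (left_mem_Icc.2 zero_le_one) hs hsm hp
      hsp hp_one hsp_one hG hGs (by simp [hcancel, hp_one])

end MixIntegral

lemma setIntegral_eq_one_of_support {X : Type*} [MeasurableSpace X] {μ : Measure X}
    {p : X → ℝ} {Ω : Set X} (hpos : ∀ x, 0 ≤ p x) (hnorm : ∫ x, p x ∂μ = 1)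
    (hΩ : Ω = {x | 0 < p x}) : ∫ x in Ω, p x ∂μ = 1 := by
  refine (setIntegral_eq_integral_of_forall_compl_eq_zero fun x hx => ?_).trans hnorm
  rw [hΩ, mem_ofPred_eq, not_lt] at hx
  exact le_antisymm hx (hpos x)

lemma overlap_eq_mixIntegral {p₀ p₁ s : ℝ → ℝ} {Ω : Set ℝ} (hΩ : MeasurableSet Ω)
    (hp₀ : ∀ w ∈ Ω, p₀ w ≠ 0) (hp₁ : ∀ w ∈ Ω, p₁ w = s w * p₀ w) :
    overlap Ω p₀ p₁ = mixIntegral (volume.restrict Ω) s (fun w => s w * p₀ w) := by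
  funext α
  refine setIntegral_congr_fun hΩ fun w hw => ?_
  rw [hp₁ w hw, show α * p₀ w + (1 - α) * (s w * p₀ w) = (α + (1 - α) * s w) * p₀ w by ring,
    mul_comm (p₀ w), mul_div_mul_right _ _ (hp₀ w hw)]

theorem mse_boundary_limits_general
    (p₀ p₁ : ℝ → ℝ) (Ω : Set ℝ) (Δf : ℝ)
    (hm0 : Measurable p₀)
    (hpos0 : ∀ w, 0 ≤ p₀ w) (hpos1 : ∀ w, 0 ≤ p₁ w)
    (hnorm0 : ∫ w, p₀ w = 1) (hnorm1 : ∫ w, p₁ w = 1)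
    (hΩ0 : Ω = {w | 0 < p₀ w}) (hΩ1 : Ω = {w | 0 < p₁ w})
    (hft : ∀ w ∈ Ω, p₀ w = Real.exp (w - Δf) * p₁ w)
    (hv0 : IntegrableOn (fun w =>
      (Real.exp (-(w - Δf)) - wMean Ω p₀ (fun v => Real.exp (-(v - Δf)))) ^ 2
        * p₀ w) Ω)
    (hv1 : IntegrableOn (fun w =>
      (Real.exp (w - Δf) - wMean Ω p₁ (fun v => Real.exp (v - Δf))) ^ 2
        * p₁ w) Ω) :
    Tendsto (mseM Ω p₀ p₁) (nhdsWithin 1 (Ioo (0:ℝ) 1))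
      (nhds (wVar Ω p₀ (fun w => Real.exp (-(w - Δf))))) ∧
    Tendsto (mseM Ω p₀ p₁) (nhdsWithin 0 (Ioo (0:ℝ) 1))
      (nhds (wVar Ω p₁ (fun w => Real.exp (w - Δf)))) := by
  set s : ℝ → ℝ := fun w => exp (-(w - Δf)) with hs_def
  have hs : ∀ w, 0 < s w := fun w => exp_pos _
  have hsm : Measurable s := by fun_prop
  have hΩ : MeasurableSet Ω := hΩ0 ▸ measurableSet_lt measurable_const hm0
  have hexp : ∀ w, exp (w - Δf) = (s w)⁻¹ := fun w => by rw [hs_def, ← exp_neg, neg_neg]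
  have hp₁ : ∀ w ∈ Ω, p₁ w = s w * p₀ w := fun w hw => by
    rw [hft w hw, hexp, mul_inv_cancel_left₀ (hs w).ne']
  have hI₀ := setIntegral_eq_one_of_support hpos0 hnorm0 hΩ0
  have hI₁ := setIntegral_eq_one_of_support hpos1 hnorm1 hΩ1
  have hmean₀ : wMean Ω p₀ s = 1 := (setIntegral_congr_fun hΩ hp₁).symm.trans hI₁
  have hmean₁ : wMean Ω p₁ (fun v => exp (v - Δf)) = 1 :=
    (setIntegral_congr_fun hΩ fun w hw => (hft w hw).symm).trans hI₀
  have hvar₁ : ∀ w ∈ Ω, (exp (w - Δf) - 1) ^ 2 * p₁ w = (s w - 1) ^ 2 * p₀ w / s w := by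
    intro w hw
    rw [hexp, hp₁ w hw]
    field_simp [(hs w).ne']
    ring
  have hp : IntegrableOn p₀ Ω := (Integrable.of_integral_ne_zero (by simp [hnorm0])).integrableOn
  have hsp : IntegrableOn (fun w => s w * p₀ w) Ω :=
    (Integrable.of_integral_ne_zero (by simp [hnorm1])).integrableOn.congr_fun hp₁ hΩ
  rw [hmean₀] at hv0
  rw [hmean₁] at hv1
  have hM : mseM Ω p₀ p₁ = mixMse (volume.restrict Ω) s p₀ := by
    unfold mseM mixMse
    rw [overlap_eq_mixIntegral hΩ (fun w hw => (show 0 < p₀ w by rwa [hΩ0] at hw).ne') hp₁]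
  rw [hM, wVar, wVar, hmean₀, hmean₁, setIntegral_congr_fun hΩ hvar₁]
  exact tendsto_mixMse_boundary hs hsm hp hsp hI₀ hmean₀ hv0 (hv1.congr_fun hvar₁ hΩ)

/-- Boundary limits of the mean square error: if the fluctuation theorem
`p₀ w = exp (w - Δf) * p₁ w` holds on `Ω` and the variances
`Var₀(e^{-(w-Δf)})` and `Var₁(e^{w-Δf})` are finite, then
`M(α) → Var₀(e^{-(w-Δf)})` as `α → 1⁻` and
`M(α) → Var₁(e^{w-Δf})` as `α → 0⁺`. -/
theorem mse_boundary_limits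
    (p₀ p₁ : ℝ → ℝ) (Ω : Set ℝ) (Δf : ℝ)
    (hm0 : Measurable p₀) (hm1 : Measurable p₁)
    (hpos0 : ∀ w, 0 ≤ p₀ w) (hpos1 : ∀ w, 0 ≤ p₁ w)
    (hnorm0 : ∫ w, p₀ w = 1) (hnorm1 : ∫ w, p₁ w = 1)
    (hΩ0 : Ω = {w | 0 < p₀ w}) (hΩ1 : Ω = {w | 0 < p₁ w})
    (hft : ∀ w ∈ Ω, p₀ w = Real.exp (w - Δf) * p₁ w)
    (hm0' : IntegrableOn (fun w => Real.exp (-(w - Δf)) * p₀ w) Ω)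
    (hv0 : IntegrableOn (fun w =>
      (Real.exp (-(w - Δf)) - wMean Ω p₀ (fun v => Real.exp (-(v - Δf)))) ^ 2
        * p₀ w) Ω)
    (hm1' : IntegrableOn (fun w => Real.exp (w - Δf) * p₁ w) Ω)
    (hv1 : IntegrableOn (fun w =>
      (Real.exp (w - Δf) - wMean Ω p₁ (fun v => Real.exp (v - Δf))) ^ 2
        * p₁ w) Ω) :
    Tendsto (mseM Ω p₀ p₁) (nhdsWithin 1 (Ioo (0:ℝ) 1))
      (nhds (wVar Ω p₀ (fun w => Real.exp (-(w - Δf))))) ∧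
    Tendsto (mseM Ω p₀ p₁) (nhdsWithin 0 (Ioo (0:ℝ) 1))
      (nhds (wVar Ω p₁ (fun w => Real.exp (w - Δf)))) :=
  mse_boundary_limits_general p₀ p₁ Ω Δf hm0 hpos0 hpos1 hnorm0 hnorm1 hΩ0 hΩ1 hft hv0 hv1
end

section
/- Exponential work distributions: let μ₀ > 0 and define p₀(w) = (1/μ₀)e^{−w/μ₀} and p₁(w) = (1/μ₁)e^{−w/μ₁} on Ω = (0,∞) with μ₁ = μ₀/(1+μ₀). Then the fluctuation theorem p₀(w) = e^{w−Δf} p₁(w) holds on Ω with Δf = ln(1+μ₀), and the boundary values of the rescaled asymptotic mean square error are M(1) = Var₀(e^{−(w−Δf)}) = μ₀²/(1+2μ₀) and, provided μ₀ < 1, M(0) = Var₁(e^{w−Δf}) = μ₀²/(1−μ₀²); in particular M(0) > M(1) for all 0 < μ₀ < 1. -/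
open MeasureTheory Real Set

/-!
With `Δf = log (1 + μ₀)` one has `e^{-(w-Δf)} = (1+μ₀) e^{-w}` and `e^{w-Δf} = e^{w}/(1+μ₀)`,
so both variances are variances of `c e^{s w}` under an exponential density with mean `μ`.
These reduce to the moment generating function `⟨e^{s w}⟩ = 1/(1 - s μ)` (finite for `s μ < 1`)
through `Var(g) = ⟨g²⟩ - ⟨g⟩²`. The second variance needs `⟨e^{2w}⟩_1` with `μ₁ = μ₀/(1+μ₀)`,
which is finite exactly when `μ₀ < 1`.
-/

theorem wVar_eq_wMean_sq_sub_sq {Ω : Set ℝ} {q g : ℝ → ℝ}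
    (hq : IntegrableOn q Ω) (hq_one : ∫ w in Ω, q w = 1)
    (hg : IntegrableOn (fun w => g w * q w) Ω)
    (hg2 : IntegrableOn (fun w => g w ^ 2 * q w) Ω) :
    wVar Ω q g = wMean Ω q (fun w => g w ^ 2) - wMean Ω q g ^ 2 := by
  unfold wVar
  set m := wMean Ω q g
  have hexpand : ∀ w, (g w - m) ^ 2 * q w = g w ^ 2 * q w - 2 * m * (g w * q w) + m ^ 2 * q w :=
    fun w => by ring
  have hg2_sub : IntegrableOn (fun w => g w ^ 2 * q w - 2 * m * (g w * q w)) Ω :=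
    hg2.sub (hg.const_mul _)
  simp_rw [hexpand]
  rw [integral_add hg2_sub (hq.const_mul _), integral_sub hg2 (hg.const_mul _),
    integral_const_mul, integral_const_mul, hq_one, show ∫ w in Ω, g w * q w = m from rfl]
  simp only [wMean]
  ring

/-- The exponential density with mean `μ`. -/
noncomputable def expDensity (μ w : ℝ) : ℝ :=
  1 / μ * exp (-w / μ)

section ExpDensity

variable {μ : ℝ}

theorem sub_inv_neg_of_mul_lt_one (hμ : 0 < μ) {s : ℝ} (hs : s * μ < 1) : s - μ⁻¹ < 0 := by
  rw [sub_neg, ← one_mul μ⁻¹, lt_mul_inv_iff₀ hμ]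
  exact hs

theorem exp_mul_mul_expDensity (hμ : 0 < μ) (s w : ℝ) :
    exp (s * w) * expDensity μ w = μ⁻¹ * exp ((s - μ⁻¹) * w) := by
  rw [expDensity, sub_mul, sub_eq_add_neg, exp_add]
  field_simp

theorem integrableOn_exp_mul_mul_expDensity (hμ : 0 < μ) {s : ℝ} (hs : s * μ < 1) :
    IntegrableOn (fun w => exp (s * w) * expDensity μ w) (Ioi 0) := by
  have hrate := sub_inv_neg_of_mul_lt_one hμ hs
  simp_rw [exp_mul_mul_expDensity hμ]
  exact (integrableOn_exp_mul_Ioi hrate 0).const_mul _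

theorem integral_exp_mul_mul_expDensity (hμ : 0 < μ) {s : ℝ} (hs : s * μ < 1) :
    ∫ w in Ioi 0, exp (s * w) * expDensity μ w = 1 / (1 - s * μ) := by
  have hrate := sub_inv_neg_of_mul_lt_one hμ hs
  simp_rw [exp_mul_mul_expDensity hμ]
  have hmgf : -1 / (s - μ⁻¹) = μ / (1 - s * μ) := by
    rw [div_eq_div_iff hrate.ne (by linarith), mul_sub μ, mul_inv_cancel₀ hμ.ne']
    ring
  rw [integral_const_mul, integral_exp_mul_Ioi hrate, mul_zero, exp_zero, hmgf, ← mul_div_assoc,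
    inv_mul_cancel₀ hμ.ne']

theorem integrableOn_expDensity (hμ : 0 < μ) : IntegrableOn (expDensity μ) (Ioi 0) := by
  simpa using integrableOn_exp_mul_mul_expDensity hμ (s := 0) (by simp)

theorem integral_expDensity (hμ : 0 < μ) : ∫ w in Ioi 0, expDensity μ w = 1 := by
  simpa using integral_exp_mul_mul_expDensity hμ (s := 0) (by simp)

theorem wMean_expDensity_const_mul_exp (hμ : 0 < μ) {s : ℝ} (hs : s * μ < 1) (c : ℝ) :
    wMean (Ioi 0) (expDensity μ) (fun w => c * exp (s * w)) = c / (1 - s * μ) := by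
  simp_rw [wMean, mul_assoc]
  rw [integral_const_mul, integral_exp_mul_mul_expDensity hμ hs, mul_one_div]

theorem wVar_expDensity_const_mul_exp (hμ : 0 < μ) {s : ℝ} (hs : 2 * s * μ < 1) (c : ℝ) :
    wVar (Ioi 0) (expDensity μ) (fun w => c * exp (s * w)) =
      c ^ 2 * (1 / (1 - 2 * s * μ) - 1 / (1 - s * μ) ^ 2) := by
  have hs' : s * μ < 1 := by linarith
  have hsq : ∀ w, (c * exp (s * w)) ^ 2 = c ^ 2 * exp (2 * s * w) := fun w => by
    rw [mul_pow, ← exp_nat_mul]; ring_nf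
  have hint : ∀ {t : ℝ}, t * μ < 1 → ∀ d : ℝ,
      IntegrableOn (fun w => d * exp (t * w) * expDensity μ w) (Ioi 0) := fun ht d =>
    IntegrableOn.congr_fun ((integrableOn_exp_mul_mul_expDensity hμ ht).const_mul d)
      (fun w _ => by ring) measurableSet_Ioi
  rw [wVar_eq_wMean_sq_sub_sq (integrableOn_expDensity hμ) (integral_expDensity hμ) (hint hs' c)
    (by simpa only [hsq] using hint (by linarith) (c ^ 2))]
  simp_rw [hsq]
  rw [wMean_expDensity_const_mul_exp hμ (by linarith), wMean_expDensity_const_mul_exp hμ hs',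
    div_pow]
  ring

theorem expDensity_eq_exp_sub_log_mul_expDensity (hμ : 0 < μ) (w : ℝ) :
    expDensity μ w = exp (w - log (1 + μ)) * expDensity (μ / (1 + μ)) w := by
  have h1μ : 0 < 1 + μ := by linarith
  rw [expDensity, expDensity, exp_sub, exp_log h1μ,
    show -w / (μ / (1 + μ)) = -w + -w / μ by field_simp; ring, exp_add, exp_neg]
  field_simp

end ExpDensity

/-- Exponential work distributions: let `μ₀ > 0`, `p₀ w = (1/μ₀) e^{-w/μ₀}`,
`p₁ w = (1/μ₁) e^{-w/μ₁}` on `Ω = (0,∞)` with `μ₁ = μ₀/(1+μ₀)`. Then the fluctuation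
theorem `p₀ w = e^{w-Δf} p₁ w` holds on `Ω` with `Δf = ln(1+μ₀)`, and the boundary
values of the rescaled asymptotic mean square error are
`M(1) = Var₀(e^{-(w-Δf)}) = μ₀²/(1+2μ₀)` and, for `μ₀ < 1`,
`M(0) = Var₁(e^{w-Δf}) = μ₀²/(1-μ₀²)`; in particular `M(0) > M(1)` for `0 < μ₀ < 1`. -/
theorem exponential_work_distributions
    (μ₀ μ₁ Δf : ℝ) (hμ₀ : 0 < μ₀)
    (hμ₁ : μ₁ = μ₀ / (1 + μ₀)) (hΔf : Δf = Real.log (1 + μ₀))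
    (p₀ p₁ : ℝ → ℝ)
    (hp₀ : ∀ w, p₀ w = (1 / μ₀) * Real.exp (-w / μ₀))
    (hp₁ : ∀ w, p₁ w = (1 / μ₁) * Real.exp (-w / μ₁)) :
    (∀ w ∈ Ioi (0:ℝ), p₀ w = Real.exp (w - Δf) * p₁ w) ∧
    wVar (Ioi 0) p₀ (fun w => Real.exp (-(w - Δf))) = μ₀ ^ 2 / (1 + 2 * μ₀) ∧
    (μ₀ < 1 →
      wVar (Ioi 0) p₁ (fun w => Real.exp (w - Δf)) = μ₀ ^ 2 / (1 - μ₀ ^ 2)) ∧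
    (μ₀ < 1 →
      wVar (Ioi 0) p₀ (fun w => Real.exp (-(w - Δf)))
        < wVar (Ioi 0) p₁ (fun w => Real.exp (w - Δf))) := by
  have h1μ : 0 < 1 + μ₀ := by linarith
  obtain rfl : p₀ = expDensity μ₀ := funext hp₀
  obtain rfl : p₁ = expDensity μ₁ := funext hp₁
  have hexp_neg : (fun w => exp (-(w - Δf))) = fun w => (1 + μ₀) * exp (-1 * w) := by
    funext w
    rw [hΔf, neg_sub, exp_sub, exp_log h1μ, neg_one_mul, exp_neg, div_eq_mul_inv]
  have hexp : (fun w => exp (w - Δf)) = fun w => (1 + μ₀)⁻¹ * exp (1 * w) := by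
    funext w
    rw [hΔf, exp_sub, exp_log h1μ, one_mul, div_eq_inv_mul]
  have hvar₀ : wVar (Ioi 0) (expDensity μ₀) (fun w => exp (-(w - Δf))) =
      μ₀ ^ 2 / (1 + 2 * μ₀) := by
    rw [hexp_neg, wVar_expDensity_const_mul_exp hμ₀ (by linarith),
      show 1 - 2 * -1 * μ₀ = 1 + 2 * μ₀ by ring, show 1 - -1 * μ₀ = 1 + μ₀ by ring]
    field_simp
    ring
  have hvar₁ (hlt : μ₀ < 1) : wVar (Ioi 0) (expDensity μ₁) (fun w => exp (w - Δf)) =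
      μ₀ ^ 2 / (1 - μ₀ ^ 2) := by
    have h2μ₁ : 2 * 1 * μ₁ < 1 := by rw [hμ₁, mul_one, mul_div_assoc', div_lt_one h1μ]; linarith
    rw [hexp, wVar_expDensity_const_mul_exp (hμ₁ ▸ div_pos hμ₀ h1μ) h2μ₁, hμ₁,
      show 1 - 2 * 1 * (μ₀ / (1 + μ₀)) = (1 - μ₀) / (1 + μ₀) by field_simp; ring,
      show 1 - 1 * (μ₀ / (1 + μ₀)) = 1 / (1 + μ₀) by field_simp; ring]
    have : 1 - μ₀ ≠ 0 := by linarith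
    have : 1 - μ₀ ^ 2 ≠ 0 := by nlinarith
    field_simp
    ring
  refine ⟨fun w _ => hΔf ▸ hμ₁ ▸ expDensity_eq_exp_sub_log_mul_expDensity hμ₀ w, hvar₀, hvar₁,
    fun hlt => ?_⟩
  rw [hvar₀, hvar₁ hlt]
  exact div_lt_div_of_pos_left (by positivity) (by nlinarith) (by nlinarith)
end
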